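/- Let (X_k, y_k, Y_k, τ_k, κ_k)_{k≥0} with μ_k = (Tr(X_kY_k)+τ_kκ_k)/(n+1), X_k, Y_k ∈ S^n_{++}, τ_k, κ_k > 0, be a sequence of iterates generated by the infeasible predictor–corrector algorithm on the homogeneous feasibility model (Algorithm 4.1): at step k, the predictor direction solves the dual-HKM system at (X_k,y_k,Y_k,τ_k,κ_k) with σ = 0 and residuals r̄_i = Tr(A_iX_k)−b_iτ_k, s̄ = ∑(y_k)_iA_i+Y_k, γ̄ = κ_k−b^Ty_k; a step length ᾱ_k ∈ [α₁, α₂] is taken to an intermediate point; the corrector direction solves the dual-HKM system at the intermediate point with σ = 1−ᾱ_k and zero residuals and is added in full; μ_{k+1} = (1−ᾱ_k)μ_k. Let (X̂_k, Ŷ_k)_{k≥0} with μ̂_k = Tr(X̂_kŶ_k)/(n+1) be generated by the corresponding SDLCP algorithm (Algorithm 4.2) on the sSDLCP, with X̂_0 = diag(X_0,τ_0), Ŷ_0 = diag(Y_0,κ_0): predictor direction solving Ŷ^{1/2}(X̂ΔŶ+ΔX̂Ŷ)Ŷ^{−1/2}+Ŷ^{−1/2}(ΔŶX̂+ŶΔX̂)Ŷ^{1/2}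 = 2(σμ̂I−Ŷ^{1/2}X̂Ŷ^{1/2}), Â(ΔX̂)+B̂(ΔŶ) = −(Â(X̂)+B̂(Ŷ)) with σ=0; the same step lengths ᾱ_k; corrector with σ = 1−ᾱ_k and Â(ΔX̂)+B̂(ΔŶ) = 0; μ̂_{k+1} = (1−ᾱ_k)μ̂_k. Assume each of these linear systems has a unique solution at every iteration. Then for every k ≥ 0: X̂_k = diag(X_k, τ_k), Ŷ_k = diag(Y_k, κ_k), and μ̂_k = μ_k; moreover, if (X_k,y_k,Y_k,τ_k,κ_k) ∈ N(β₁,μ_k) then (X̂_k, Ŷ_k) ∈ N₁(β₁, μ̂_k). -/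

import Mathlib

open Matrix BigOperators

noncomputable section

/-- Real square matrices of size `k`. -/
abbrev Mat (k : ℕ) : Type := Matrix (Fin k) (Fin k) ℝ

/-- `dgE P q` is the block-diagonal `(n+1) × (n+1)` matrix `diag(P, q)`. -/
def dgE {n : ℕ} (P : Mat n) (q : ℝ) : Mat (n + 1) :=
  Matrix.of fun i j =>
    if hi : (i : ℕ) < n then
      (if hj : (j : ℕ) < n then P ⟨i, hi⟩ ⟨j, hj⟩ else 0)
    else (if (j : ℕ) < n then 0 else q)

/-- Index type for `ℝ^{ñ₁}`, split as the first `m` coordinates, the next `n`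
coordinates, and the last `ñ+1−m` (here `k`) coordinates; `ñ₁ = m + n + (ñ+1−m)`. -/
abbrev SIdx (n m k : ℕ) : Type := Fin m ⊕ Fin n ⊕ Fin k

/-- The linear map `Â : S^{n+1} → ℝ^{ñ₁}` of the sSDLCP. -/
def Ahat {n m k : ℕ} (A : Fin m → Mat n) (b : Fin m → ℝ) (Xh : Mat (n + 1)) :
    SIdx n m k → ℝ
  | Sum.inl i => (dgE (A i) (-(b i)) * Xh).trace
  | Sum.inr (Sum.inl i) => Xh i.castSucc (Fin.last n)
  | Sum.inr (Sum.inr _) => 0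

/-- The linear map `B̂ : S^{n+1} → ℝ^{ñ₁}` of the sSDLCP, where `dd` is the vector `d`. -/
def Bhat {n m k : ℕ} (B : Fin k → Mat n) (dd : Fin k → ℝ) (Yh : Mat (n + 1)) :
    SIdx n m k → ℝ
  | Sum.inl _ => 0
  | Sum.inr (Sum.inl _) => 0
  | Sum.inr (Sum.inr j) => (dgE (B j) (dd j) * Yh).trace


open Classical in
/-- `psqrt M` is the (unique) positive semidefinite square root of `M` when `M` is
positive semidefinite, and the junk value `0` otherwise.  For positive definite `M`
this is the unique positive definite square root `M^{1/2}`. -/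
def psqrt {k : ℕ} (M : Mat k) : Mat k :=
  if h : M.PosSemidef then
    (h.1.eigenvectorUnitary : Mat k) * Matrix.diagonal (fun i => Real.sqrt (h.1.eigenvalues i)) *
      (star h.1.eigenvectorUnitary : Mat k)
  else 0

/-- The Frobenius norm `‖G‖_F = √(Tr (G Gᵀ))`. -/
def frob {k : ℕ} (G : Mat k) : ℝ := Real.sqrt (G * Gᵀ).trace

/-- Membership of `(X, y, Y, τ, κ)` in the central-path neighborhood `N(β, μ)`:
`X, Y ≻ 0`, `τ, κ > 0`, `μ = (Tr(XY) + τκ)/(n+1)`, and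
`(‖Y^{1/2} X Y^{1/2} − μI‖_F² + (τκ − μ)²)^{1/2} ≤ βμ`. -/
def inN (n m : ℕ) (β μ : ℝ) (X : Mat n) (y : Fin m → ℝ) (Y : Mat n) (τ κ : ℝ) : Prop :=
  X.PosDef ∧ Y.PosDef ∧ 0 < τ ∧ 0 < κ ∧
  μ = ((X * Y).trace + τ * κ) / ((n : ℝ) + 1) ∧
  Real.sqrt ((frob (psqrt Y * X * psqrt Y - μ • (1 : Mat n))) ^ 2 + (τ * κ - μ) ^ 2)
    ≤ β * μ

/-- Membership of `(X̂, Ŷ)` in the central-path neighborhood `N₁(β, μ̂)` for the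
sSDLCP: `X̂, Ŷ ≻ 0`, `μ̂ = Tr(X̂Ŷ)/n₁`, and `‖Ŷ^{1/2} X̂ Ŷ^{1/2} − μ̂I‖_F ≤ βμ̂`. -/
def inN1 (n1 : ℕ) (β muh : ℝ) (Xh Yh : Mat n1) : Prop :=
  Xh.PosDef ∧ Yh.PosDef ∧ muh = (Xh * Yh).trace / (n1 : ℝ) ∧
  frob (psqrt Yh * Xh * psqrt Yh - muh • (1 : Mat n1)) ≤ β * muh

/-- The dual-HKM linear system for the homogeneous feasibility model at the point
`(X, y, Y, τ, κ)` with centering parameter `σ`, duality measure `μ`, and residuals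
`(rb, sb, γb)`; `(DX, Dy, DY, Dτ, Dκ)` is a (symmetric) solution. -/
def HKMsys {n m : ℕ} (A : Fin m → Mat n) (b : Fin m → ℝ)
    (X Y : Mat n) (τ κ σ μ : ℝ) (rb : Fin m → ℝ) (sb : Mat n) (γb : ℝ)
    (DX : Mat n) (Dy : Fin m → ℝ) (DY : Mat n) (Dτ Dκ : ℝ) : Prop :=
  DX.IsSymm ∧ DY.IsSymm ∧
  (psqrt Y * (X * DY + DX * Y) * (psqrt Y)⁻¹
      + (psqrt Y)⁻¹ * (DY * X + Y * DX) * psqrt Y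
    = (2 : ℝ) • ((σ * μ) • (1 : Mat n) - psqrt Y * X * psqrt Y)) ∧
  (κ * Dτ + τ * Dκ = σ * μ - τ * κ) ∧
  (∀ i, (A i * DX).trace - b i * Dτ = -(rb i)) ∧
  ((∑ i, Dy i • A i) + DY = -sb) ∧
  (Dκ - (∑ i, b i * Dy i) = -γb)

/-- The linear system for the sSDLCP at `(X̂, Ŷ)` with centering parameter `σ`,
duality measure `μ̂` and residual `r`; `(DXh, DYh)` is a (symmetric) solution. -/
def HKMhat {n m k : ℕ} (A : Fin m → Mat n) (b : Fin m → ℝ)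
    (B : Fin k → Mat n) (dd : Fin k → ℝ)
    (Xh Yh : Mat (n + 1)) (σ muh : ℝ) (r : SIdx n m k → ℝ)
    (DXh DYh : Mat (n + 1)) : Prop :=
  DXh.IsSymm ∧ DYh.IsSymm ∧
  (psqrt Yh * (Xh * DYh + DXh * Yh) * (psqrt Yh)⁻¹
      + (psqrt Yh)⁻¹ * (DYh * Xh + Yh * DXh) * psqrt Yh
    = (2 : ℝ) • ((σ * muh) • (1 : Mat (n + 1)) - psqrt Yh * Xh * psqrt Yh)) ∧
  (∀ idx, Ahat A b DXh idx + Bhat B dd DYh idx = -(r idx))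

/-- The quantity `δ` of the predictor step length rule, computed from the current
point and the predictor direction (in block-diagonal embedded form):
`δ = (1/μ) ‖ diag(Y,κ)^{1/2} diag(ΔX,Δτ) diag(ΔY,Δκ) diag(Y,κ)^{−1/2} ‖_F`. -/
def stepDelta {n : ℕ} (Y : Mat n) (κ μ : ℝ) (DX : Mat n) (Dτ : ℝ)
    (DY : Mat n) (Dκ : ℝ) : ℝ :=
  (1 / μ) * frob (psqrt (dgE Y κ) * dgE DX Dτ * dgE DY Dκ * (psqrt (dgE Y κ))⁻¹)

/-- The lower step length bound `α₁ = 2/(√(1 + 4δ/(β₂−β₁)) + 1)`. -/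
def stepAlpha1 (β1 β2 δ : ℝ) : ℝ := 2 / (Real.sqrt (1 + 4 * δ / (β2 - β1)) + 1)


section Aux
variable {n : ℕ} (P R : Mat n) (q s : ℝ)

@[simp] lemma dgE_cc (i j : Fin n) : dgE P q i.castSucc j.castSucc = P i j := by
  simp [dgE, i.is_lt, j.is_lt]
@[simp] lemma dgE_cl (i : Fin n) : dgE P q i.castSucc (Fin.last n) = 0 := by
  simp [dgE, i.is_lt]
@[simp] lemma dgE_lc (j : Fin n) : dgE P q (Fin.last n) j.castSucc = 0 := by
  simp [dgE, j.is_lt]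
@[simp] lemma dgE_ll : dgE P q (Fin.last n) (Fin.last n) = q := by
  simp [dgE]

lemma dgE_eq_dgE {P R : Mat n} {q s : ℝ} : dgE P q = dgE R s ↔ P = R ∧ q = s := by
  constructor
  · intro h
    constructor
    · ext i j
      have := congrFun (congrFun h i.castSucc) j.castSucc
      simpa using this
    · have := congrFun (congrFun h (Fin.last n)) (Fin.last n)
      simpa using this
  · rintro ⟨rfl, rfl⟩; rfl

lemma dgE_add : dgE P q + dgE R s = dgE (P + R) (q + s) := by
  ext i j
  induction i using Fin.lastCases with
  | last => induction j using Fin.lastCases with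
    | last => simp
    | cast j => simp
  | cast i => induction j using Fin.lastCases with
    | last => simp
    | cast j => simp

lemma dgE_smul (c : ℝ) : c • dgE P q = dgE (c • P) (c * q) := by
  ext i j
  induction i using Fin.lastCases with
  | last => induction j using Fin.lastCases with
    | last => simp
    | cast j => simp
  | cast i => induction j using Fin.lastCases with
    | last => simp
    | cast j => simp

lemma dgE_sub : dgE P q - dgE R s = dgE (P - R) (q - s) := by
  ext i j
  induction i using Fin.lastCases with
  | last => induction j using Fin.lastCases with
    | last => simp
    | cast j => simp
  | cast i => induction j using Fin.lastCases with
    | last => simp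
    | cast j => simp

lemma dgE_mul : dgE P q * dgE R s = dgE (P * R) (q * s) := by
  ext i j
  induction i using Fin.lastCases with
  | last => induction j using Fin.lastCases with
    | last => simp [Matrix.mul_apply, Fin.sum_univ_castSucc]
    | cast j => simp [Matrix.mul_apply, Fin.sum_univ_castSucc]
  | cast i => induction j using Fin.lastCases with
    | last => simp [Matrix.mul_apply, Fin.sum_univ_castSucc]
    | cast j => simp [Matrix.mul_apply, Fin.sum_univ_castSucc]

lemma dgE_one : dgE (1 : Mat n) 1 = (1 : Mat (n + 1)) := by
  ext i j
  induction i using Fin.lastCases with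
  | last => induction j using Fin.lastCases with
    | last => simp
    | cast j => simp [Matrix.one_apply, (Fin.castSucc_lt_last j).ne']
  | cast i => induction j using Fin.lastCases with
    | last => simp [Matrix.one_apply, (Fin.castSucc_lt_last i).ne]
    | cast j => simp [Matrix.one_apply, Fin.castSucc_inj]

lemma dgE_transpose : (dgE P q)ᵀ = dgE Pᵀ q := by
  ext i j
  induction i using Fin.lastCases with
  | last => induction j using Fin.lastCases with
    | last => simp
    | cast j => simp
  | cast i => induction j using Fin.lastCases with
    | last => simp
    | cast j => simp

lemma dgE_trace : (dgE P q).trace = P.trace + q := by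
  simp [Matrix.trace, Matrix.diag, Fin.sum_univ_castSucc]


lemma dgE_mulVec_cast (x : Fin (n + 1) → ℝ) (i : Fin n) :
    (dgE P q *ᵥ x) i.castSucc = (P *ᵥ (x ∘ Fin.castSucc)) i := by
  simp [Matrix.mulVec, dotProduct, Fin.sum_univ_castSucc]

lemma dgE_mulVec_last (x : Fin (n + 1) → ℝ) :
    (dgE P q *ᵥ x) (Fin.last n) = q * x (Fin.last n) := by
  simp [Matrix.mulVec, dotProduct, Fin.sum_univ_castSucc]

lemma dgE_dot (x : Fin (n + 1) → ℝ) :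
    x ⬝ᵥ (dgE P q *ᵥ x) =
      (x ∘ Fin.castSucc) ⬝ᵥ (P *ᵥ (x ∘ Fin.castSucc)) + q * x (Fin.last n) * x (Fin.last n) := by
  rw [dotProduct, Fin.sum_univ_castSucc, dgE_mulVec_last]
  rw [dotProduct]
  congr 1
  · exact Finset.sum_congr rfl fun i _ => by rw [dgE_mulVec_cast]; rfl
  · ring

lemma real_isHermitian_iff (M : Mat n) : M.IsHermitian ↔ Mᵀ = M := by
  constructor
  · intro h; ext i j
    have := congrFun (congrFun h i) j
    simpa [Matrix.conjTranspose_apply] using this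
  · intro h
    ext i j
    have := congrFun (congrFun h i) j
    simpa [Matrix.conjTranspose_apply] using this

lemma dgE_isSymm {P : Mat n} {q : ℝ} (h : P.IsSymm) : (dgE P q).IsSymm := by
  unfold Matrix.IsSymm
  rw [dgE_transpose, h]

lemma dgE_isHermitian {P : Mat n} {q : ℝ} (hP : P.IsHermitian) : (dgE P q).IsHermitian := by
  rw [real_isHermitian_iff] at hP ⊢
  rw [dgE_transpose, hP]

lemma vec_split_ne_zero {x : Fin (n + 1) → ℝ} (hx : x ≠ 0) :
    (x ∘ Fin.castSucc) ≠ 0 ∨ x (Fin.last n) ≠ 0 := by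
  by_contra h
  push_neg at h
  apply hx
  ext i
  induction i using Fin.lastCases with
  | last => exact h.2
  | cast i => exact congrFun h.1 i

lemma dgE_posSemidef {P : Mat n} {q : ℝ} (hP : P.PosSemidef) (hq : 0 ≤ q) :
    (dgE P q).PosSemidef := by
  refine Matrix.posSemidef_iff_dotProduct_mulVec.mpr ⟨dgE_isHermitian hP.1, fun x => ?_⟩
  have := dgE_dot P q x
  simp only [star_trivial] at *
  rw [this]
  have h1 := (Matrix.posSemidef_iff_dotProduct_mulVec.mp hP).2 (x ∘ Fin.castSucc)
  simp only [star_trivial] at h1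
  nlinarith [sq_nonneg (x (Fin.last n))]

lemma dgE_posDef {P : Mat n} {q : ℝ} (hP : P.PosDef) (hq : 0 < q) :
    (dgE P q).PosDef := by
  refine Matrix.posDef_iff_dotProduct_mulVec.mpr ⟨dgE_isHermitian hP.1, fun x hx => ?_⟩
  simp only [star_trivial]
  rw [dgE_dot]
  rcases vec_split_ne_zero hx with h | h
  · have h1 := (Matrix.posDef_iff_dotProduct_mulVec.mp hP).2 h
    simp only [star_trivial] at h1
    nlinarith [sq_nonneg (x (Fin.last n))]
  · have h1 := (Matrix.posSemidef_iff_dotProduct_mulVec.mp hP.posSemidef).2 (x ∘ Fin.castSucc)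
    simp only [star_trivial] at h1
    have h2 : 0 < q * x (Fin.last n) * x (Fin.last n) := by
      rw [mul_assoc]
      exact mul_pos hq (mul_self_pos.mpr h)
    linarith

open scoped MatrixOrder in
lemma psqrt_eq_sqrt {k : ℕ} {M : Mat k} (h : M.PosSemidef) : psqrt M = CFC.sqrt M := by
  have h0 : (0 : Mat k) ≤ M := Matrix.nonneg_iff_posSemidef.mpr h
  rw [psqrt, dif_pos h, CFC.sqrt_eq_real_sqrt M h0, cfcₙ_eq_cfc, h.1.cfc_eq]
  simp [Matrix.IsHermitian.cfc, Unitary.conjStarAlgAut_apply, Function.comp_def]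

open scoped MatrixOrder in
lemma psqrt_mul_self {k : ℕ} {M : Mat k} (h : M.PosSemidef) : psqrt M * psqrt M = M := by
  rw [psqrt_eq_sqrt h, ← pow_two]
  exact CFC.sq_sqrt M (Matrix.nonneg_iff_posSemidef.mpr h)

open scoped MatrixOrder in
lemma psqrt_posSemidef {k : ℕ} {M : Mat k} (h : M.PosSemidef) : (psqrt M).PosSemidef := by
  rw [psqrt_eq_sqrt h]
  exact Matrix.nonneg_iff_posSemidef.mp (CFC.sqrt_nonneg M)

open scoped MatrixOrder in
lemma psqrt_dgE {Y : Mat n} {κ : ℝ} (hY : Y.PosDef) (hκ : 0 < κ) :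
    psqrt (dgE Y κ) = dgE (psqrt Y) (Real.sqrt κ) := by
  have hd : (dgE Y κ).PosSemidef := (dgE_posDef hY hκ).posSemidef
  rw [psqrt_eq_sqrt hd]
  refine CFC.sqrt_unique ?_ (Matrix.nonneg_iff_posSemidef.mpr
    (dgE_posSemidef (psqrt_posSemidef hY.posSemidef) (Real.sqrt_nonneg κ)))
  rw [dgE_mul, psqrt_mul_self hY.posSemidef, Real.mul_self_sqrt hκ.le]

lemma psqrt_det_isUnit {Y : Mat n} (hY : Y.PosDef) : IsUnit (psqrt Y).det := by
  have h1 : psqrt Y * psqrt Y = Y := psqrt_mul_self hY.posSemidef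
  have h2 : (psqrt Y).det * (psqrt Y).det = Y.det := by rw [← Matrix.det_mul, h1]
  have h3 : Y.det ≠ 0 := ne_of_gt hY.det_pos
  rw [isUnit_iff_ne_zero]
  intro h
  rw [h, mul_zero] at h2
  exact h3 h2.symm

lemma dgE_inv {P : Mat n} {q : ℝ} (hP : IsUnit P.det) (hq : q ≠ 0) :
    (dgE P q)⁻¹ = dgE P⁻¹ q⁻¹ := by
  refine Matrix.inv_eq_right_inv ?_
  rw [dgE_mul, Matrix.mul_nonsing_inv _ hP, mul_inv_cancel₀ hq, dgE_one]

lemma trace_mul_transpose_nonneg {k : ℕ} (G : Mat k) : 0 ≤ (G * Gᵀ).trace := by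
  rw [Matrix.trace]
  refine Finset.sum_nonneg fun i _ => ?_
  rw [Matrix.diag_apply, Matrix.mul_apply]
  refine Finset.sum_nonneg fun j _ => ?_
  rw [Matrix.transpose_apply]
  exact mul_self_nonneg _

lemma frob_sq {k : ℕ} (G : Mat k) : frob G ^ 2 = (G * Gᵀ).trace :=
  Real.sq_sqrt (trace_mul_transpose_nonneg G)

lemma frob_dgE (G : Mat n) (g : ℝ) : frob (dgE G g) = Real.sqrt (frob G ^ 2 + g ^ 2) := by
  rw [frob, dgE_transpose, dgE_mul, dgE_trace, frob_sq, pow_two]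

end Aux

section Embed
variable {n m k : ℕ}

lemma embed_HKMhat (A : Fin m → Mat n) (b : Fin m → ℝ)
    (B : Fin (k + 1) → Mat n) (dd : Fin (k + 1) → ℝ) (d1 : ℝ)
    (hdd : dd = fun j => if j = 0 then d1 else 0)
    (hB1A : ∀ i, -(d1 * b i) + (B 0 * A i).trace = 0)
    (hB0 : ∀ j : Fin (k + 1), j ≠ 0 → ∀ i, (B j * A i).trace = 0)
    (X Y : Mat n) (τ κ σ μ : ℝ) (hY : Y.PosDef) (hκ : 0 < κ)
    (rb : Fin m → ℝ) (sb : Mat n) (γb : ℝ)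
    (DX : Mat n) (Dy : Fin m → ℝ) (DY : Mat n) (Dτ Dκ : ℝ)
    (y' : Fin m → ℝ) (Yr : Mat n) (κr : ℝ)
    (hsb : sb = (∑ i, y' i • A i) + Yr)
    (hγb : γb = κr - ∑ i, b i * y' i)
    (r : SIdx n m (k + 1) → ℝ)
    (hr1 : ∀ i, r (Sum.inl i) = rb i)
    (hr2 : ∀ i : Fin n, r (Sum.inr (Sum.inl i)) = 0)
    (hr3 : ∀ j, r (Sum.inr (Sum.inr j)) = (B j * Yr).trace + dd j * κr)
    (hsys : HKMsys A b X Y τ κ σ μ rb sb γb DX Dy DY Dτ Dκ) :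
    HKMhat A b B dd (dgE X τ) (dgE Y κ) σ μ r (dgE DX Dτ) (dgE DY Dκ) := by
  obtain ⟨hDXs, hDYs, hLyap, hscal, hAeq, hsum, hκeq⟩ := hsys
  have hs0 : Real.sqrt κ ≠ 0 := (Real.sqrt_pos.mpr hκ).ne'
  have hss : Real.sqrt κ * Real.sqrt κ = κ := Real.mul_self_sqrt hκ.le
  refine ⟨dgE_isSymm hDXs, dgE_isSymm hDYs, ?_, ?_⟩
  · -- Lyapunov equation
    rw [psqrt_dgE hY hκ, dgE_inv (psqrt_det_isUnit hY) hs0, ← dgE_one]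
    simp only [dgE_mul, dgE_add, dgE_smul, dgE_sub]
    rw [dgE_eq_dgE]
    constructor
    · exact hLyap
    · have e1 : Real.sqrt κ * (τ * Dκ + Dτ * κ) * (Real.sqrt κ)⁻¹ = τ * Dκ + Dτ * κ := by
        field_simp
      have e2 : (Real.sqrt κ)⁻¹ * (Dκ * τ + κ * Dτ) * Real.sqrt κ = Dκ * τ + κ * Dτ := by
        field_simp
      rw [e1, e2]
      have e3 : Real.sqrt κ * τ * Real.sqrt κ = τ * κ := by
        rw [mul_comm (Real.sqrt κ) τ, mul_assoc, hss]
      rw [e3]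
      linear_combination 2 * hscal
  · -- constraints
    rintro (i | i | j)
    · have h := hAeq i
      simp only [Ahat, Bhat, dgE_mul, dgE_trace, hr1]
      linarith
    · simp only [Ahat, Bhat, hr2, dgE_cl, neg_zero, add_zero]
    · simp only [Ahat, Bhat, dgE_mul, dgE_trace, hr3, zero_add]
      -- trace identity from hsum
      have key : (B j * DY).trace + ∑ i, Dy i * (B j * A i).trace
          = -((∑ i, y' i * (B j * A i).trace) + (B j * Yr).trace) := by
        have h := congrArg (fun M => (B j * M).trace) hsum
        simpa [hsb, Matrix.mul_add, Matrix.mul_sum, Matrix.mul_smul, Matrix.trace_add,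
          Matrix.trace_smul, Matrix.trace_sum, smul_eq_mul, add_comm] using h
      by_cases hj : j = 0
      · subst hj
        have hdd0 : dd 0 = d1 := by rw [hdd]; simp
        have hBA : ∀ i, (B 0 * A i).trace = d1 * b i := fun i => by linarith [hB1A i]
        simp only [hBA] at key
        have hy : (∑ i, y' i * (d1 * b i)) = d1 * ∑ i, b i * y' i := by
          rw [Finset.mul_sum]
          exact Finset.sum_congr rfl fun i _ => by ring
        have hDy : (∑ i, Dy i * (d1 * b i)) = d1 * ∑ i, b i * Dy i := by
          rw [Finset.mul_sum]
          exact Finset.sum_congr rfl fun i _ => by ring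
        rw [hy, hDy] at key
        rw [hγb] at hκeq
        rw [hdd0]
        linear_combination key + d1 * hκeq
      · have hddj : dd j = 0 := by rw [hdd]; simp [hj]
        simp only [hB0 j hj, mul_zero, Finset.sum_const_zero, add_zero, zero_add] at key
        rw [hddj, key]
        ring
end Embed

lemma stepAlpha1_pos (β1 β2 δ : ℝ) : 0 < stepAlpha1 β1 β2 δ := by
  unfold stepAlpha1
  have := Real.sqrt_nonneg (1 + 4 * δ / (β2 - β1))
  positivity
/-- (Correspondence between Algorithm 4.1 on the homogeneous
feasibility model and Algorithm 4.2 on the sSDLCP.)  If the two algorithms are run with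
the same step lengths `ᾱ_k`, starting from `X̂₀ = diag(X₀, τ₀)`, `Ŷ₀ = diag(Y₀, κ₀)`,
and each of the predictor/corrector linear systems has a unique solution at every
iteration, then for all `k`: `X̂_k = diag(X_k, τ_k)`, `Ŷ_k = diag(Y_k, κ_k)`,
`μ̂_k = μ_k`, and if `(X_k,y_k,Y_k,τ_k,κ_k) ∈ N(β₁,μ_k)` then
`(X̂_k, Ŷ_k) ∈ N₁(β₁, μ̂_k)`.  (Here `ñ` is written `nt`; `B j` denotes `B_{j+1}`, so
`B 0 = B₁`, and `d = (d₁, 0, …, 0)`.) -/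
theorem algorithm_iterate_correspondence
    (n m nt : ℕ) (hm1 : 1 ≤ m) (hmn : m ≤ nt) (hnt : nt = n * (n + 1) / 2)
    (A : Fin m → Mat n) (b : Fin m → ℝ)
    (B : Fin (nt - m + 1) → Mat n) (d1 : ℝ)
    (hAsymm : ∀ i, (A i).IsSymm) (hAli : LinearIndependent ℝ A)
    (hBsymm : ∀ j, (B j).IsSymm)
    (hd1 : d1 ≠ 0)
    (hB1A : ∀ i, -(d1 * b i) + (B 0 * A i).trace = 0)
    (hBli : LinearIndependent ℝ (fun j : {j : Fin (nt - m + 1) // j ≠ 0} => B j.1))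
    (hBspan : ∀ W : Mat n,
        W ∈ Submodule.span ℝ (B '' {j | j ≠ 0}) ↔
          (W.IsSymm ∧ ∀ i, (W * A i).trace = 0))
    (dd : Fin (nt - m + 1) → ℝ) (hdd : dd = fun j => if j = 0 then d1 else 0)
    (β1 β2 : ℝ)
    (hβ : β2 ^ 2 / (2 * (1 - β2) ^ 2) ≤ β1 ∧ β1 < β2 ∧
          β2 < β2 / (1 - β2) ∧ β2 / (1 - β2) < 1)
    -- iterates of Algorithm 4.1 on the homogeneous feasibility model:
    (X Y Xb Yb DXp DYp DXc DYc : ℕ → Mat n)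
    (y yb Dyp Dyc : ℕ → Fin m → ℝ)
    (τ κ τb κb Dτp Dκp Dτc Dκc μ al : ℕ → ℝ)
    -- iterates of Algorithm 4.2 on the sSDLCP:
    (Xh Yh Xhb Yhb DXhp DYhp DXhc DYhc : ℕ → Mat (n + 1))
    (muh : ℕ → ℝ)
    (hpos : ∀ k, (X k).PosDef ∧ (Y k).PosDef ∧ 0 < τ k ∧ 0 < κ k)
    (hμ : ∀ k, μ k = ((X k * Y k).trace + τ k * κ k) / ((n : ℝ) + 1))
    -- predictor step of Algorithm 4.1 (σ = 0, residuals of the current point):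
    (hpred : ∀ k, HKMsys A b (X k) (Y k) (τ k) (κ k) 0 (μ k)
        (fun i => (A i * X k).trace - b i * τ k) ((∑ i, y k i • A i) + Y k)
        (κ k - ∑ i, b i * y k i) (DXp k) (Dyp k) (DYp k) (Dτp k) (Dκp k))
    -- step length rule `ᾱ_k ∈ [α₁, α₂]`:
    (hstep : ∀ k,
        stepAlpha1 β1 β2
            (stepDelta (Y k) (κ k) (μ k) (DXp k) (Dτp k) (DYp k) (Dκp k)) ≤ al k ∧
        al k ≤ 1 ∧
        ∀ α ∈ Set.Icc (0 : ℝ) (al k),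
          inN n m β2 ((1 - α) * μ k) (X k + α • DXp k)
            (fun i => y k i + α * Dyp k i) (Y k + α • DYp k)
            (τ k + α * Dτp k) (κ k + α * Dκp k))
    -- intermediate (predictor) point:
    (hbar : ∀ k, Xb k = X k + al k • DXp k ∧ (∀ i, yb k i = y k i + al k * Dyp k i) ∧
        Yb k = Y k + al k • DYp k ∧ τb k = τ k + al k * Dτp k ∧ κb k = κ k + al k * Dκp k)
    -- corrector step of Algorithm 4.1 (σ = 1 − ᾱ_k, zero residuals):
    (hcorr : ∀ k, HKMsys A b (Xb k) (Yb k) (τb k) (κb k) (1 - al k)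
        (((Xb k * Yb k).trace + τb k * κb k) / ((n : ℝ) + 1))
        (fun _ => 0) 0 0 (DXc k) (Dyc k) (DYc k) (Dτc k) (Dκc k))
    -- update:
    (hupd : ∀ k, X (k + 1) = Xb k + DXc k ∧ (∀ i, y (k + 1) i = yb k i + Dyc k i) ∧
        Y (k + 1) = Yb k + DYc k ∧ τ (k + 1) = τb k + Dτc k ∧ κ (k + 1) = κb k + Dκc k ∧
        μ (k + 1) = (1 - al k) * μ k)
    -- Algorithm 4.2 on the sSDLCP, with the same step lengths `ᾱ_k`:
    (hinit : Xh 0 = dgE (X 0) (τ 0) ∧ Yh 0 = dgE (Y 0) (κ 0))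
    (hmuh : ∀ k, muh k = (Xh k * Yh k).trace / ((n : ℝ) + 1))
    (hpredh : ∀ k, HKMhat A b B dd (Xh k) (Yh k) 0 (muh k)
        (fun idx => Ahat A b (Xh k) idx + Bhat B dd (Yh k) idx) (DXhp k) (DYhp k))
    (hbarh : ∀ k, Xhb k = Xh k + al k • DXhp k ∧ Yhb k = Yh k + al k • DYhp k)
    (hcorrh : ∀ k, HKMhat A b B dd (Xhb k) (Yhb k) (1 - al k)
        ((Xhb k * Yhb k).trace / ((n : ℝ) + 1)) (fun _ => 0) (DXhc k) (DYhc k))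
    (hupdh : ∀ k, Xh (k + 1) = Xhb k + DXhc k ∧ Yh (k + 1) = Yhb k + DYhc k)
    -- each of these linear systems has a unique solution at every iteration:
    (huniq_p : ∀ k DX Dy DY Dτ Dκ DX' Dy' DY' Dτ' Dκ',
        HKMsys A b (X k) (Y k) (τ k) (κ k) 0 (μ k)
          (fun i => (A i * X k).trace - b i * τ k) ((∑ i, y k i • A i) + Y k)
          (κ k - ∑ i, b i * y k i) DX Dy DY Dτ Dκ →
        HKMsys A b (X k) (Y k) (τ k) (κ k) 0 (μ k)
          (fun i => (A i * X k).trace - b i * τ k) ((∑ i, y k i • A i) + Y k)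
          (κ k - ∑ i, b i * y k i) DX' Dy' DY' Dτ' Dκ' →
        DX = DX' ∧ Dy = Dy' ∧ DY = DY' ∧ Dτ = Dτ' ∧ Dκ = Dκ')
    (huniq_c : ∀ k DX Dy DY Dτ Dκ DX' Dy' DY' Dτ' Dκ',
        HKMsys A b (Xb k) (Yb k) (τb k) (κb k) (1 - al k)
          (((Xb k * Yb k).trace + τb k * κb k) / ((n : ℝ) + 1))
          (fun _ => 0) 0 0 DX Dy DY Dτ Dκ →
        HKMsys A b (Xb k) (Yb k) (τb k) (κb k) (1 - al k)
          (((Xb k * Yb k).trace + τb k * κb k) / ((n : ℝ) + 1))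
          (fun _ => 0) 0 0 DX' Dy' DY' Dτ' Dκ' →
        DX = DX' ∧ Dy = Dy' ∧ DY = DY' ∧ Dτ = Dτ' ∧ Dκ = Dκ')
    (huniq_ph : ∀ k DXh DYh DXh' DYh',
        HKMhat A b B dd (Xh k) (Yh k) 0 (muh k)
          (fun idx => Ahat A b (Xh k) idx + Bhat B dd (Yh k) idx) DXh DYh →
        HKMhat A b B dd (Xh k) (Yh k) 0 (muh k)
          (fun idx => Ahat A b (Xh k) idx + Bhat B dd (Yh k) idx) DXh' DYh' →
        DXh = DXh' ∧ DYh = DYh')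
    (huniq_ch : ∀ k DXh DYh DXh' DYh',
        HKMhat A b B dd (Xhb k) (Yhb k) (1 - al k)
          ((Xhb k * Yhb k).trace / ((n : ℝ) + 1)) (fun _ => 0) DXh DYh →
        HKMhat A b B dd (Xhb k) (Yhb k) (1 - al k)
          ((Xhb k * Yhb k).trace / ((n : ℝ) + 1)) (fun _ => 0) DXh' DYh' →
        DXh = DXh' ∧ DYh = DYh') :
    ∀ k, Xh k = dgE (X k) (τ k) ∧ Yh k = dgE (Y k) (κ k) ∧ muh k = μ k ∧
      (inN n m β1 (μ k) (X k) (y k) (Y k) (τ k) (κ k) →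
        inN1 (n + 1) β1 (muh k) (Xh k) (Yh k)) := by
  have hB0 : ∀ j : Fin (nt - m + 1), j ≠ 0 → ∀ i, (B j * A i).trace = 0 := fun j hj =>
    ((hBspan (B j)).mp (Submodule.subset_span ⟨j, hj, rfl⟩)).2
  have key : ∀ k, Xh k = dgE (X k) (τ k) ∧ Yh k = dgE (Y k) (κ k) := by
    intro k
    induction k with
    | zero => exact ⟨hinit.1, hinit.2⟩
    | succ k ih =>
      obtain ⟨ihX, ihY⟩ := ih
      obtain ⟨hXpd, hYpd, hτ, hκ⟩ := hpos k
      have hmu : muh k = μ k := by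
        rw [hmuh k, hμ k, ihX, ihY, dgE_mul, dgE_trace]
      have hpredE : HKMhat A b B dd (Xh k) (Yh k) 0 (muh k)
          (fun idx => Ahat A b (Xh k) idx + Bhat B dd (Yh k) idx)
          (dgE (DXp k) (Dτp k)) (dgE (DYp k) (Dκp k)) := by
        rw [ihX, ihY, hmu]
        refine embed_HKMhat A b B dd d1 hdd hB1A hB0 (X k) (Y k) (τ k) (κ k) 0 (μ k)
          hYpd hκ _ _ _ _ _ _ _ _ (y k) (Y k) (κ k) rfl rfl _ ?_ ?_ ?_ (hpred k)
        · intro i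
          simp only [Ahat, Bhat, dgE_mul, dgE_trace]
          ring
        · intro i
          simp only [Ahat, Bhat, dgE_cl, add_zero, zero_add]
        · intro j
          simp only [Ahat, Bhat, dgE_mul, dgE_trace, zero_add]
      obtain ⟨hpX, hpY⟩ := huniq_ph k _ _ _ _ (hpredh k) hpredE
      obtain ⟨hbX, hby, hbY, hbτ, hbκ⟩ := hbar k
      have hXbE : Xhb k = dgE (Xb k) (τb k) := by
        rw [(hbarh k).1, hpX, ihX, dgE_smul, dgE_add, hbX, hbτ]
      have hYbE : Yhb k = dgE (Yb k) (κb k) := by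
        rw [(hbarh k).2, hpY, ihY, dgE_smul, dgE_add, hbY, hbκ]
      have hal0 : 0 ≤ al k := le_trans (stepAlpha1_pos _ _ _).le (hstep k).1
      have hbarN := (hstep k).2.2 (al k) ⟨hal0, le_refl _⟩
      rw [← hbX, ← hbY, ← hbτ, ← hbκ] at hbarN
      obtain ⟨hXbpd, hYbpd, hτb, hκb, -, -⟩ := hbarN
      have hmub : (Xhb k * Yhb k).trace / ((n : ℝ) + 1)
          = ((Xb k * Yb k).trace + τb k * κb k) / ((n : ℝ) + 1) := by
        rw [hXbE, hYbE, dgE_mul, dgE_trace]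
      have hcorrE : HKMhat A b B dd (Xhb k) (Yhb k) (1 - al k)
          ((Xhb k * Yhb k).trace / ((n : ℝ) + 1)) (fun _ => 0)
          (dgE (DXc k) (Dτc k)) (dgE (DYc k) (Dκc k)) := by
        rw [hmub, hXbE, hYbE]
        refine embed_HKMhat A b B dd d1 hdd hB1A hB0 (Xb k) (Yb k) (τb k) (κb k)
          (1 - al k) _ hYbpd hκb _ _ _ _ _ _ _ _ (fun _ => 0) 0 0 ?_ ?_ _ ?_ ?_ ?_ (hcorr k)
        · simp
        · simp
        · intro i; rfl
        · intro i; rfl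
        · intro j; simp
      obtain ⟨hcX, hcY⟩ := huniq_ch k _ _ _ _ (hcorrh k) hcorrE
      obtain ⟨huX, huy, huY, huτ, huκ, humu⟩ := hupd k
      constructor
      · rw [(hupdh k).1, hcX, hXbE, dgE_add, huX, huτ]
      · rw [(hupdh k).2, hcY, hYbE, dgE_add, huY, huκ]
  intro k
  obtain ⟨hXk, hYk⟩ := key k
  obtain ⟨hXpd, hYpd, hτ, hκ⟩ := hpos k
  have hmu : muh k = μ k := by
    rw [hmuh k, hμ k, hXk, hYk, dgE_mul, dgE_trace]
  refine ⟨hXk, hYk, hmu, ?_⟩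
  rintro ⟨-, -, -, -, -, hle⟩
  refine ⟨?_, ?_, ?_, ?_⟩
  · rw [hXk]; exact dgE_posDef hXpd hτ
  · rw [hYk]; exact dgE_posDef hYpd hκ
  · rw [hmuh k]
    push_cast
    ring
  · rw [hXk, hYk, hmu, psqrt_dgE hYpd hκ, dgE_mul, dgE_mul, ← dgE_one, dgE_smul, dgE_sub,
      frob_dgE]
    have e3 : Real.sqrt (κ k) * τ k * Real.sqrt (κ k) = τ k * κ k := by
      rw [mul_comm (Real.sqrt (κ k)) (τ k), mul_assoc, Real.mul_self_sqrt hκ.le]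
    rw [e3, mul_one]
    exact hle

end
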